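/- Let (σ_t)_{t≥0} be positive, nonincreasing with lim_{t→∞} t·(σ_t/σ_{t+1} − 1) = L for some L ∈ [0,1), and suppose (t+1)·t·σ_t² is strictly increasing and diverges. Then lim_{t→∞} (∑_{i=1}^{t}(i+1)·i·(σ_{i-1} − σ_i)·σ_i) / ((t+1)·t·σ_t²) = L/(2(1−L)). -/

import Mathlib

/-!
Stolz–Cesàro reduces the limit to that of the quotient of consecutive increments. With
`x_n = σ_n / σ_{n+1} - 1`, both increments carry the factor `(n+1) σ_{n+1}²`, and the quotient
becomes `(n+2) x_n / (2 - n x_n (x_n + 2))`. Since `n x_n → L` forces `x_n → 0`, this tends to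
`L / (2 - 2L)`.
-/

open Filter Topology Asymptotics Finset

/-- The Stolz–Cesàro theorem in the `∙/∞` case. -/
theorem tendsto_div_of_tendsto_sub_div_sub {a b : ℕ → ℝ} {l : ℝ} (hb : StrictMono b)
    (hb_top : Tendsto b atTop atTop)
    (h : Tendsto (fun n => (a (n + 1) - a n) / (b (n + 1) - b n)) atTop (𝓝 l)) :
    Tendsto (fun n => a n / b n) atTop (𝓝 l) := by
  have hdb : ∀ n, 0 < b (n + 1) - b n := fun n => sub_pos.2 (hb n.lt_succ_self)
  have hstep : (fun n => (a (n + 1) - a n) - l * (b (n + 1) - b n)) =o[atTop]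
      fun n => b (n + 1) - b n := by
    refine (isLittleO_iff_tendsto fun n hn => absurd hn (hdb n).ne').2 ?_
    refine (tendsto_sub_nhds_zero_iff.2 h).congr fun n => ?_
    field_simp [(hdb n).ne']
  have htel : (fun n => (a n - a 0) - l * (b n - b 0)) =o[atTop] fun n => b n - b 0 := by
    have hsum : ∀ n, ∑ i ∈ range n, ((a (i + 1) - a i) - l * (b (i + 1) - b i))
        = (a n - a 0) - l * (b n - b 0) := fun n => by
      rw [sum_sub_distrib, ← mul_sum, sum_range_sub, sum_range_sub]
    have := hstep.sum_range (fun n => (hdb n).le) (by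
      simp_rw [sum_range_sub, sub_eq_add_neg]
      exact tendsto_atTop_add_const_right _ _ hb_top)
    simpa only [hsum, sum_range_sub] using this
  have hconst : ∀ c : ℝ, (fun _ : ℕ => c) =o[atTop] b := fun c =>
    isLittleO_const_left.2 (Or.inr (tendsto_norm_atTop_atTop.comp hb_top))
  have hmain : (fun n => a n - l * b n) =o[atTop] b := by
    have hO : (fun n => b n - b 0) =O[atTop] b := (isBigO_refl b _).sub (hconst _).isBigO
    refine ((htel.trans_isBigO hO).add (hconst (a 0 - l * b 0))).congr_left fun n => ?_
    ring
  refine (zero_add l ▸ hmain.tendsto_div_nhds_zero.add_const l).congr' ?_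
  filter_upwards [hb_top.eventually_gt_atTop 0] with n hn
  field_simp
  ring

theorem tendsto_zero_of_tendsto_natCast_mul {x : ℕ → ℝ} {L : ℝ}
    (h : Tendsto (fun n : ℕ => (n : ℝ) * x n) atTop (𝓝 L)) : Tendsto x atTop (𝓝 0) := by
  refine (h.div_atTop tendsto_natCast_atTop_atTop).congr' ?_
  filter_upwards [eventually_gt_atTop 0] with n hn
  field_simp

theorem tendsto_increment_ratio {x : ℕ → ℝ} {L : ℝ}
    (hx : Tendsto (fun n : ℕ => (n : ℝ) * x n) atTop (𝓝 L)) (hL : L ≠ 1) :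
    Tendsto (fun n : ℕ => ((n : ℝ) + 2) * x n / (2 - (n : ℝ) * x n * (x n + 2))) atTop
      (𝓝 (L / (2 * (1 - L)))) := by
  have hx0 := tendsto_zero_of_tendsto_natCast_mul hx
  have hnum : Tendsto (fun n : ℕ => (n : ℝ) * x n + 2 * x n) atTop (𝓝 (L + 2 * 0)) :=
    hx.add (hx0.const_mul 2)
  have hden : Tendsto (fun n : ℕ => 2 - (n : ℝ) * x n * (x n + 2)) atTop
      (𝓝 (2 - L * (0 + 2))) :=
    tendsto_const_nhds.sub (hx.mul (hx0.add_const 2))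
  convert hnum.div hden (by grind) using 1
  · ext n
    simp only [Pi.div_apply]
    ring
  · congr 1
    ring

theorem increment_quotient_eq (x y : ℝ) (n : ℕ) (hy : y ≠ 0) :
    ((n : ℝ) + 2) * (n + 1) * (x - y) * y / ((n + 2) * (n + 1) * y ^ 2 - (n + 1) * n * x ^ 2)
      = (n + 2) * (x / y - 1) / (2 - n * (x / y - 1) * (x / y - 1 + 2)) := by
  have hc : ((n : ℝ) + 1) * y ^ 2 ≠ 0 := by positivity
  have hnum : ((n : ℝ) + 2) * (n + 1) * (x - y) * y
      = (n + 1) * y ^ 2 * ((n + 2) * (x / y - 1)) := by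
    field_simp
  have hden : ((n : ℝ) + 2) * (n + 1) * y ^ 2 - (n + 1) * n * x ^ 2
      = (n + 1) * y ^ 2 * (2 - n * (x / y - 1) * (x / y - 1 + 2)) := by
    field_simp
    ring
  rw [hnum, hden, mul_div_mul_left _ _ hc]

theorem stmt_11_general (σ : ℕ → ℝ) (L : ℝ)
    (hpos : ∀ t, 0 < σ t)
    (hlim : Tendsto (fun t : ℕ => (t : ℝ) * (σ t / σ (t + 1) - 1)) atTop (nhds L))
    (hL1 : L < 1)
    (hinc : StrictMono (fun t : ℕ => ((t : ℝ) + 1) * (t : ℝ) * σ t ^ 2))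
    (hdiv : Tendsto (fun t : ℕ => ((t : ℝ) + 1) * (t : ℝ) * σ t ^ 2) atTop atTop) :
    Tendsto (fun t : ℕ =>
        (∑ i ∈ Finset.Icc 1 t, ((i : ℝ) + 1) * (i : ℝ) * (σ (i - 1) - σ i) * σ i)
          / (((t : ℝ) + 1) * (t : ℝ) * σ t ^ 2)) atTop (nhds (L / (2 * (1 - L)))) := by
  refine tendsto_div_of_tendsto_sub_div_sub hinc hdiv
    ((tendsto_increment_ratio hlim hL1.ne).congr fun n => ?_)
  rw [sum_Icc_succ_top n.succ_pos', add_sub_cancel_left, Nat.add_sub_cancel,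
    ← increment_quotient_eq _ _ n (hpos (n + 1)).ne']
  push_cast
  ring

theorem stmt_11 (σ : ℕ → ℝ) (L : ℝ)
    (hpos : ∀ t, 0 < σ t)
    (hmono : ∀ t, σ (t + 1) ≤ σ t)
    (hlim : Tendsto (fun t : ℕ => (t : ℝ) * (σ t / σ (t + 1) - 1)) atTop (nhds L))
    (hL0 : 0 ≤ L) (hL1 : L < 1)
    (hinc : StrictMono (fun t : ℕ => ((t : ℝ) + 1) * (t : ℝ) * σ t ^ 2))
    (hdiv : Tendsto (fun t : ℕ => ((t : ℝ) + 1) * (t : ℝ) * σ t ^ 2) atTop atTop) :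
    Tendsto (fun t : ℕ =>
        (∑ i ∈ Finset.Icc 1 t, ((i : ℝ) + 1) * (i : ℝ) * (σ (i - 1) - σ i) * σ i)
          / (((t : ℝ) + 1) * (t : ℝ) * σ t ^ 2)) atTop (nhds (L / (2 * (1 - L)))) :=
  stmt_11_general σ L hpos hlim hL1 hinc hdiv
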